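/- If H is a biconnected component of a graph G and H contains at least two vertices, then there is a min-cycle of G all of whose vertices lie in H. -/

import Mathlib

open SimpleGraph

/-- A cycle `c` in `G` is a min-cycle if for every two vertices `u,v` on the cycle,
the distance between `u` and `v` in the graph consisting of the edges of the cycle
(i.e. the distance along the cycle) equals their distance in `G`. -/
def IsMinCycle {V : Type*} {G : SimpleGraph V} {a : V} (c : G.Walk a a) : Prop :=
  c.IsCycle ∧ ∀ u ∈ c.support, ∀ v ∈ c.support,
    (SimpleGraph.fromEdgeSet {e | e ∈ c.edges}).dist u v = G.dist u v
/-- There exist two internally vertex-disjoint (distinct) paths between `u` and `v` in `G`. -/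
def TwoDisjointPaths {V : Type*} (G : SimpleGraph V) (u v : V) : Prop :=
  ∃ p q : G.Walk u v, p.IsPath ∧ q.IsPath ∧ p ≠ q ∧
    ∀ x, x ∈ p.support → x ∈ q.support → x = u ∨ x = v

/-- `H` is a biconnected component of `G`: a maximal set of vertices such that between
any two distinct vertices of `H` there are two internally vertex-disjoint paths in `G`. -/
def IsBiconnectedComponent {V : Type*} (G : SimpleGraph V) (H : Set V) : Prop :=
  (∀ u ∈ H, ∀ v ∈ H, u ≠ v → TwoDisjointPaths G u v) ∧
  ∀ H' : Set V, H ⊆ H' → (∀ u ∈ H', ∀ v ∈ H', u ≠ v → TwoDisjointPaths G u v) → H' = H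

/-!
A cycle through two distinct vertices of a biconnected component `H` lies in `H`: each of its
vertices lies on a common cycle with each vertex of `H` (the cycles are rerouted along ears), so
adjoining the cycle to `H` keeps the defining property, and maximality of `H` absorbs it.
Consequently a shortest cycle inside `H` is a shortest cycle through any two of its vertices, and
such a cycle is a min-cycle: if two of its vertices `u, v` were closer in `G` than along it, then
for such a pair with `G.dist u v` least, a shortest `u`-`v` path meets the cycle only in `u` and
`v` and closes up with one of its arcs to a shorter cycle through `u` and `v`.
-/

namespace SimpleGraph.Walk

variable {V : Type*} {G : SimpleGraph V} {a u v w x y : V}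

lemma IsPath.start_notMem_support_tail {p : G.Walk u v} (hp : p.IsPath) :
    u ∉ p.support.tail :=
  (List.nodup_cons.mp (p.cons_tail_support ▸ hp.support_nodup)).1

lemma IsPath.append {p : G.Walk u v} {q : G.Walk v w} (hp : p.IsPath) (hq : q.IsPath)
    (hpq : ∀ x ∈ p.support, x ∈ q.support → x = v) : (p.append q).IsPath := by
  refine IsPath.mk' ?_
  rw [support_append, List.nodup_append']
  refine ⟨hp.support_nodup, hq.support_nodup.sublist (List.tail_sublist _),
    fun x hxp hxq ↦ ?_⟩
  obtain rfl := hpq x hxp (List.mem_of_mem_tail hxq)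
  exact hq.start_notMem_support_tail hxq

lemma one_lt_length_append {p : G.Walk u v} {q : G.Walk v w} (huv : u ≠ v) (hvw : v ≠ w) :
    1 < (p.append q).length := by
  have := not_nil_iff_lt_length.mp (not_nil_of_ne (p := p) huv)
  have := not_nil_iff_lt_length.mp (not_nil_of_ne (p := q) hvw)
  rw [length_append]
  omega

lemma IsCycle.eq_or_eq_of_mem_support_append {p : G.Walk u v} {q : G.Walk v u}
    (hc : (p.append q).IsCycle) (hxp : x ∈ p.support) (hxq : x ∈ q.support) : x = u ∨ x = v := by
  have hnd := hc.support_nodup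
  rw [tail_support_append, List.nodup_append'] at hnd
  by_contra! h
  exact hnd.2.2 ((p.mem_support_iff.mp hxp).resolve_left h.1)
    ((q.mem_support_iff.mp hxq).resolve_left h.2)

lemma IsPath.isCycle_append_of_eq_or_eq {p : G.Walk u v} {q : G.Walk v u} (hp : p.IsPath)
    (hq : q.IsPath) (hpq : ∀ x ∈ p.support, x ∈ q.support → x = u ∨ x = v)
    (hn : 1 < p.length ∨ 1 < q.length) : (p.append q).IsCycle := by
  refine hp.isCycle_append hq (fun x hxp hxq ↦ ?_) hn
  rcases hpq x (List.mem_of_mem_tail hxp) (List.mem_of_mem_tail hxq) with rfl | rfl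
  · exact hp.start_notMem_support_tail hxp
  · exact hq.start_notMem_support_tail hxq

lemma IsCycle.append_comm {p : G.Walk u v} {q : G.Walk v u} (hc : (p.append q).IsCycle) :
    (q.append p).IsCycle := by
  have hlen := hc.three_le_length
  rw [isCycle_def, isTrail_def, edges_append, tail_support_append] at hc
  rw [isCycle_def, isTrail_def, edges_append, tail_support_append]
  refine ⟨List.perm_append_comm.nodup_iff.mp hc.1, fun h ↦ ?_,
    List.perm_append_comm.nodup_iff.mp hc.2.2⟩
  have := congrArg length h
  rw [length_append, length_nil] at this
  rw [length_append] at hlen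
  omega

lemma exists_eq_append_first_mem (p : G.Walk u v) {S : Set V} (h : ∃ x ∈ p.support, x ∈ S) :
    ∃ x ∈ S, ∃ (q : G.Walk u x) (r : G.Walk x v), p = q.append r ∧
      ∀ y ∈ q.support, y ∈ S → y = x := by
  induction p with
  | nil =>
    obtain ⟨x, hx, hxS⟩ := h
    rw [mem_support_nil_iff] at hx
    subst hx
    exact ⟨x, hxS, nil, nil, rfl, fun y hy _ ↦ mem_support_nil_iff.mp hy⟩
  | @cons u' _ _ hadj p ih =>
    by_cases hu : u' ∈ S
    · exact ⟨u', hu, nil, cons hadj p, rfl, fun y hy _ ↦ mem_support_nil_iff.mp hy⟩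
    obtain ⟨x, hxS, q, r, rfl, hq⟩ := ih <| by
      obtain ⟨x, hx, hxS⟩ := h
      rw [support_cons, List.mem_cons] at hx
      exact ⟨x, hx.resolve_left (by rintro rfl; exact hu hxS), hxS⟩
    refine ⟨x, hxS, cons hadj q, r, rfl, fun y hy hyS ↦ ?_⟩
    rw [support_cons, List.mem_cons] at hy
    exact hy.elim (fun h ↦ absurd (h ▸ hyS) hu) (hq y · hyS)

lemma exists_eq_append_last_mem (p : G.Walk u v) {S : Set V} (h : ∃ x ∈ p.support, x ∈ S) :
    ∃ x ∈ S, ∃ (q : G.Walk u x) (r : G.Walk x v), p = q.append r ∧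
      ∀ y ∈ r.support, y ∈ S → y = x := by
  obtain ⟨x, hxS, q, r, hqr, hq⟩ :=
    p.reverse.exists_eq_append_first_mem (by simpa only [support_reverse, List.mem_reverse])
  refine ⟨x, hxS, r.reverse, q.reverse, ?_, fun y hy ↦ hq y (by simpa using hy)⟩
  rw [← reverse_append, ← hqr, reverse_reverse]

lemma IsCycle.exists_arcs {c : G.Walk a a} (hc : c.IsCycle) (hx : x ∈ c.support)
    (hy : y ∈ c.support) :
    ∃ (p : G.Walk x y) (q : G.Walk y x), (p.append q).IsCycle ∧
      (p.append q).length = c.length ∧ (∀ e ∈ (p.append q).edges, e ∈ c.edges) ∧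
      ∀ z, z ∈ (p.append q).support ↔ z ∈ c.support := by
  classical
  obtain ⟨p, q, hpq⟩ :=
    mem_support_iff_exists_append.mp ((c.mem_support_rotate_iff x hx).mpr hy)
  refine ⟨p, q, hpq ▸ hc.rotate hx, by rw [← hpq, length_rotate], fun e he ↦ ?_,
    fun z ↦ ?_⟩
  · rw [← hpq] at he
    exact (c.rotate_edges x hx).mem_iff.mp he
  · rw [← hpq, mem_support_rotate_iff]

lemma IsCycle.isPath_of_append_of_ne {p : G.Walk x y} {q : G.Walk y x} (hc : (p.append q).IsCycle)
    (hxy : x ≠ y) : p.IsPath ∧ q.IsPath :=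
  ⟨hc.isPath_of_append_left (not_nil_of_ne hxy.symm),
    hc.isPath_of_append_right (not_nil_of_ne hxy)⟩

lemma IsCycle.exists_isCycle_of_ear {c : G.Walk a a} (hc : c.IsCycle) {s : G.Walk x y}
    (hs : s.IsPath) (hs₁ : 1 < s.length) (hx : x ∈ c.support) (hy : y ∈ c.support)
    (hsc : ∀ z ∈ s.support, z ∈ c.support → z = x ∨ z = y) (hw : w ∈ c.support) :
    ∃ (r : V) (c' : G.Walk r r), c'.IsCycle ∧ w ∈ c'.support ∧
      ∀ z ∈ s.support, z ∈ c'.support := by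
  have hxy : x ≠ y := by
    rintro rfl
    rw [(isPath_iff_nil.mp hs).length_eq_zero] at hs₁
    omega
  obtain ⟨p, q, hpq, -, -, hsupp⟩ := hc.exists_arcs hy hx
  obtain ⟨hp, hq⟩ := hpq.isPath_of_append_of_ne hxy.symm
  rcases (mem_support_append_iff p q).mp ((hsupp w).mpr hw) with hwp | hwq
  · refine ⟨x, s.append p, hs.isCycle_append_of_eq_or_eq hp (fun z hzs hzp ↦ hsc z hzs ?_)
      (Or.inl hs₁), by simp [hwp], fun z hz ↦ by simp [hz]⟩
    exact (hsupp z).mp ((mem_support_append_iff p q).mpr (Or.inl hzp))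
  · refine ⟨y, s.reverse.append q, hs.reverse.isCycle_append_of_eq_or_eq hq
      (fun z hzs hzq ↦ (hsc z (by simpa using hzs) ?_).symm) (Or.inl (by simpa)),
      by simp [hwq], fun z hz ↦ by simp [hz]⟩
    exact (hsupp z).mp ((mem_support_append_iff p q).mpr (Or.inr hzq))

lemma edges_mem_edgeSet_fromEdgeSet {s : Set (Sym2 V)} (p : G.Walk u v)
    (hp : ∀ e ∈ p.edges, e ∈ s) : ∀ e ∈ p.edges, e ∈ (fromEdgeSet s).edgeSet :=
  fun e he ↦ (edgeSet_fromEdgeSet s).symm ▸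
    ⟨hp e he, G.not_isDiag_of_mem_edgeSet (p.edges_subset_edgeSet he)⟩

lemma dist_fromEdgeSet_le {s : Set (Sym2 V)} (p : G.Walk u v) (hp : ∀ e ∈ p.edges, e ∈ s) :
    (fromEdgeSet s).dist u v ≤ p.length := by
  simpa using dist_le (p.transfer _ (p.edges_mem_edgeSet_fromEdgeSet hp))

lemma fromEdgeSet_edges_le {c : G.Walk u v} : fromEdgeSet {e | e ∈ c.edges} ≤ G :=
  G.fromEdgeSet_le.mpr fun _ he ↦ c.edges_subset_edgeSet he.1

def IsShortestThroughPairs (c : G.Walk a a) : Prop :=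
  ∀ u ∈ c.support, ∀ v ∈ c.support, u ≠ v → ∀ (b : V) (c' : G.Walk b b), c'.IsCycle →
    u ∈ c'.support → v ∈ c'.support → c.length ≤ c'.length

variable {c : G.Walk a a}

lemma IsCycle.reachable_fromEdgeSet (hc : c.IsCycle) (hu : u ∈ c.support)
    (hv : v ∈ c.support) :
    (fromEdgeSet {e | e ∈ c.edges}).Reachable u v := by
  obtain ⟨p, q, -, -, hedges, -⟩ := hc.exists_arcs hu hv
  rw [edges_append] at hedges
  exact (p.transfer _ (p.edges_mem_edgeSet_fromEdgeSet
    fun e he ↦ hedges e (List.mem_append_left _ he))).reachable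

lemma IsCycle.dist_fromEdgeSet_le_length (hc : c.IsCycle) (hmin : c.IsShortestThroughPairs)
    (hu : u ∈ c.support) (hv : v ∈ c.support) (huv : u ≠ v) {p : G.Walk u v} (hp : p.IsPath)
    (hpc : ∀ z ∈ p.support, z ∈ c.support → z = u ∨ z = v) :
    (fromEdgeSet {e | e ∈ c.edges}).dist u v ≤ p.length := by
  obtain ⟨q₁, q₂, hq, hlen, hedges, hsupp⟩ := hc.exists_arcs hu hv
  rw [edges_append] at hedges
  have h₁ := q₁.dist_fromEdgeSet_le (s := {e | e ∈ c.edges})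
    fun e he ↦ hedges e (List.mem_append_left _ he)
  have h₂ := dist_comm.trans_le <| q₂.dist_fromEdgeSet_le (s := {e | e ∈ c.edges})
    fun e he ↦ hedges e (List.mem_append_right _ he)
  have hp₁ : 0 < p.length := not_nil_iff_lt_length.mp (not_nil_of_ne huv)
  by_cases hq₂ : q₂.length ≤ 1
  · omega
  -- otherwise `p ++ q₂` is a cycle through `u` and `v`, so it is no shorter than `q₁ ++ q₂`
  have hcyc : (p.append q₂).IsCycle :=
    hp.isCycle_append_of_eq_or_eq (hq.isPath_of_append_of_ne huv).2
      (fun z hzp hzq ↦ hpc z hzp ((hsupp z).mp (by simp [hzq]))) (Or.inr (by omega))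
  have hle := hmin u hu v hv huv u _ hcyc (by simp) (by simp)
  rw [length_append] at hle hlen
  omega

lemma IsCycle.dist_fromEdgeSet_le_dist (hc : c.IsCycle) (hmin : c.IsShortestThroughPairs)
    (hu : u ∈ c.support) (hv : v ∈ c.support) :
    (fromEdgeSet {e | e ∈ c.edges}).dist u v ≤ G.dist u v := by
  induction hn : G.dist u v using Nat.strong_induction_on generalizing u v with
  | _ n ih =>
  obtain rfl | huv := eq_or_ne u v
  · simp
  obtain ⟨p, hp, hplen⟩ :=
    ((hc.reachable_fromEdgeSet hu hv).mono fromEdgeSet_edges_le).exists_path_of_dist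
  by_cases h : ∃ z ∈ p.support, z ∈ c.support ∧ z ≠ u ∧ z ≠ v
  · obtain ⟨z, hzp, hzc, hzu, hzv⟩ := h
    obtain ⟨p₁, p₂, rfl⟩ := mem_support_iff_exists_append.mp hzp
    have h₁ := not_nil_iff_lt_length.mp (not_nil_of_ne (p := p₁) hzu.symm)
    have h₂ := not_nil_iff_lt_length.mp (not_nil_of_ne (p := p₂) hzv)
    have hd₁ := dist_le p₁
    have hd₂ := dist_le p₂
    rw [length_append] at hplen
    set K := fromEdgeSet {e | e ∈ c.edges}
    calc K.dist u v ≤ K.dist u z + K.dist z v :=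
          (hc.reachable_fromEdgeSet hu hzc).dist_triangle_left v
      _ ≤ G.dist u z + G.dist z v :=
          add_le_add (ih _ (by omega) hu hzc rfl) (ih _ (by omega) hzc hv rfl)
      _ ≤ n := by omega
  · push Not at h
    exact hn ▸ hplen ▸ hc.dist_fromEdgeSet_le_length hmin hu hv huv hp
      fun z hzp hzc ↦ or_iff_not_imp_left.mpr (h z hzp hzc)

lemma IsCycle.isMinCycle (hc : c.IsCycle) (hmin : c.IsShortestThroughPairs) : IsMinCycle c :=
  ⟨hc, fun _ hu _ hv ↦ (hc.dist_fromEdgeSet_le_dist hmin hu hv).antisymm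
    ((hc.reachable_fromEdgeSet hu hv).dist_anti fromEdgeSet_edges_le)⟩

end SimpleGraph.Walk

namespace SimpleGraph

open Walk

variable {V : Type*} {G : SimpleGraph V} {a b r u v w x y : V}

def OnCommonCycle (G : SimpleGraph V) (u v : V) : Prop :=
  ∃ (r : V) (c : G.Walk r r), c.IsCycle ∧ u ∈ c.support ∧ v ∈ c.support

lemma OnCommonCycle.symm (h : G.OnCommonCycle u v) : G.OnCommonCycle v u :=
  let ⟨r, c, hc, hu, hv⟩ := h
  ⟨r, c, hc, hv, hu⟩

lemma Walk.IsCycle.onCommonCycle_of_two_mem {c₁ : G.Walk a a} {c₂ : G.Walk b b}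
    (hc₁ : c₁.IsCycle) (hc₂ : c₂.IsCycle) (hx₁ : x ∈ c₁.support) (hx₂ : x ∈ c₂.support)
    (hy₁ : y ∈ c₁.support) (hy₂ : y ∈ c₂.support) (hxy : x ≠ y) (hu : u ∈ c₁.support)
    (hw : w ∈ c₂.support) : G.OnCommonCycle u w := by
  classical
  by_cases hw₁ : w ∈ c₁.support
  · exact ⟨a, c₁, hc₁, hu, hw₁⟩
  let S : Set V := {z | z ∈ c₁.support}
  have hmem : ∀ z ∈ c₂.support, z ∈ (c₂.rotate w hw).support :=
    fun z hz ↦ (c₂.mem_support_rotate_iff w hw).mpr hz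
  -- the stretch of `c₂` around `w` between its nearest vertices `t`, `s` on `c₁` is an ear of `c₁`
  obtain ⟨s, hsS, p₁, q, hsplit, hp₁⟩ :=
    (c₂.rotate w hw).exists_eq_append_first_mem (S := S) ⟨x, hmem x hx₂, hx₁⟩
  obtain ⟨t, htS, m, p₂, rfl, hp₂⟩ :=
    q.exists_eq_append_last_mem (S := S) ⟨s, q.start_mem_support, hsS⟩
  have hc : (p₁.append (m.append p₂)).IsCycle := hsplit ▸ hc₂.rotate hw
  have hc' : (m.append (p₂.append p₁)).IsCycle := by
    simpa only [append_assoc] using hc.append_comm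
  have hws : w ≠ s := fun h ↦ hw₁ (h ▸ hsS)
  have hwt : w ≠ t := fun h ↦ hw₁ (h ▸ htS)
  have hlen : 1 < (p₂.append p₁).length := one_lt_length_append hwt.symm hws
  have hst : s ≠ t := by
    rintro rfl
    have hm : m.Nil := isPath_iff_nil.mp <| hc'.isPath_of_append_left <|
      not_nil_iff_lt_length.mpr (Nat.zero_lt_one.trans hlen)
    have hS : ∀ z ∈ c₂.support, z ∈ S → z = s := by
      intro z hz hzS
      have := hmem z hz
      rw [hsplit, mem_support_append_iff, mem_support_append_iff, nil_iff_support_eq.mp hm,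
        List.mem_singleton] at this
      rcases this with h | h | h
      · exact hp₁ z h hzS
      · exact h
      · exact hp₂ z h hzS
    exact hxy ((hS x hx₂ hx₁).trans (hS y hy₂ hy₁).symm)
  have hear : (p₂.append p₁).IsPath := hc'.isPath_of_append_right (not_nil_of_ne hst)
  have hearc₁ : ∀ z ∈ (p₂.append p₁).support, z ∈ S → z = t ∨ z = s := fun z hz hzS ↦
    ((mem_support_append_iff _ _).mp hz).imp (hp₂ z · hzS) (hp₁ z · hzS)
  obtain ⟨r, c, hc, hu', hear'⟩ := hc₁.exists_isCycle_of_ear hear hlen htS hsS hearc₁ hu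
  exact ⟨r, c, hc, hu', hear' w (by simp)⟩

lemma Walk.IsCycle.onCommonCycle_of_fan {c : G.Walk r r} (hc : c.IsCycle) (ha : a ∈ c.support)
    (hb : b ∈ c.support) (hav : G.OnCommonCycle a v) {p : G.Walk v b}
    (hp : p.IsPath) (hap : a ∉ p.support) (hu : u ∈ c.support) : G.OnCommonCycle u v := by
  obtain ⟨r', ca, hca, haca, hvca⟩ := hav
  by_cases h : ∃ x ∈ ca.support, x ∈ c.support ∧ x ≠ a
  · obtain ⟨x, hxca, hxc, hxa⟩ := h
    exact hc.onCommonCycle_of_two_mem hca ha haca hxc hxca hxa.symm hu hvca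
  push Not at h
  -- `p` runs from `ca` to its first vertex `y` on `c`; its last stretch `s` off `ca`, continued
  -- along `c` to `a`, is an ear of `ca`, closing up through `v` to a cycle that meets `c` twice
  obtain ⟨y, hyc, T, rest, rfl, hT⟩ :=
    p.exists_eq_append_first_mem (S := {z | z ∈ c.support}) ⟨b, p.end_mem_support, hb⟩
  obtain ⟨z, hzca, m, s, rfl, hs⟩ :=
    T.exists_eq_append_last_mem (S := {z | z ∈ ca.support}) ⟨v, T.start_mem_support, hvca⟩
  have hya : y ≠ a := fun h ↦ hap (by simp [← h])
  have hzy : z ≠ y := fun hzy ↦ hya (hzy ▸ h z hzca (hzy ▸ hyc))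
  obtain ⟨arc, _, harc, -, -, harcc⟩ := hc.exists_arcs hyc ha
  have harcc' : ∀ x ∈ arc.support, x ∈ c.support := fun x hx ↦
    (harcc x).mp ((mem_support_append_iff _ _).mpr (Or.inl hx))
  have hsc : ∀ x ∈ s.support, x ∈ c.support → x = y := fun x hx ↦ hT x (by simp [hx])
  have hear : (s.append arc).IsPath :=
    hp.of_append_left.of_append_right.append (harc.isPath_of_append_of_ne hya).1
      (fun x hxs hxarc ↦ hsc x hxs (harcc' x hxarc))
  have hearca : ∀ x ∈ (s.append arc).support, x ∈ ca.support → x = z ∨ x = a :=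
    fun x hx hxca ↦
      ((mem_support_append_iff _ _).mp hx).imp (hs x · hxca) (fun hx ↦ h x hxca (harcc' x hx))
  obtain ⟨r'', c', hc', hvc', hearc'⟩ :=
    hca.exists_isCycle_of_ear hear (one_lt_length_append hzy hya) hzca haca hearca hvca
  exact hc.onCommonCycle_of_two_mem hc' ha (hearc' a (by simp)) hyc (hearc' y (by simp))
    hya.symm hu hvc'

end SimpleGraph

section

open SimpleGraph Walk

variable {V : Type*} {G : SimpleGraph V} {a b r u v x : V}

lemma TwoDisjointPaths.onCommonCycle (h : TwoDisjointPaths G u v) : G.OnCommonCycle u v := by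
  obtain ⟨p, q, hp, hq, hpq, hdisj⟩ := h
  have hlen : 1 < p.length ∨ 1 < q.reverse.length := by
    by_contra! hle
    exact hpq (eq_of_length_le_one hle.1 (by simpa using hle.2))
  exact ⟨u, p.append q.reverse, hp.isCycle_append_of_eq_or_eq hq.reverse
    (fun x hxp hxq ↦ hdisj x hxp (by simpa using hxq)) hlen, by simp, by simp⟩

lemma TwoDisjointPaths.exists_isPath_notMem (h : TwoDisjointPaths G u v) (hxu : x ≠ u)
    (hxv : x ≠ v) : ∃ p : G.Walk u v, p.IsPath ∧ x ∉ p.support := by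
  obtain ⟨p, q, hp, hq, -, hdisj⟩ := h
  by_cases hx : x ∈ p.support
  · exact ⟨q, hq, fun hxq ↦ (hdisj x hx hxq).elim hxu hxv⟩
  · exact ⟨p, hp, hx⟩

lemma SimpleGraph.OnCommonCycle.twoDisjointPaths (h : G.OnCommonCycle u v) (huv : u ≠ v) :
    TwoDisjointPaths G u v := by
  obtain ⟨r, c, hc, hu, hv⟩ := h
  obtain ⟨p, q, hpq, -, -, -⟩ := hc.exists_arcs hu hv
  obtain ⟨hp, hq⟩ := hpq.isPath_of_append_of_ne huv
  refine ⟨p, q.reverse, hp, hq.reverse, fun h ↦ ?_,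
    fun x hxp hxq ↦ hpq.eq_or_eq_of_mem_support_append hxp (by simpa using hxq)⟩
  -- the two arcs of a cycle share no edge
  have hnd := hpq.edges_nodup
  rw [edges_append, List.nodup_append'] at hnd
  obtain ⟨e, he⟩ := List.exists_mem_of_ne_nil p.edges (edges_eq_nil.not.mpr (not_nil_of_ne huv))
  exact hnd.2.2 he (by simpa [h] using he)

lemma IsBiconnectedComponent.support_subset_of_isCycle {H : Set V}
    (hH : IsBiconnectedComponent G H) {c : G.Walk r r} (hc : c.IsCycle) (ha : a ∈ c.support)
    (hb : b ∈ c.support) (hab : a ≠ b) (haH : a ∈ H) (hbH : b ∈ H) :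
    ∀ x ∈ c.support, x ∈ H := by
  have hcommon : ∀ u ∈ c.support, ∀ v ∈ H, G.OnCommonCycle u v := by
    intro u hu v hvH
    by_cases hv : v ∈ c.support
    · exact ⟨r, c, hc, hu, hv⟩
    have hav : a ≠ v := fun h ↦ hv (h ▸ ha)
    obtain ⟨p, hp, hap⟩ :=
      (hH.1 v hvH b hbH fun h ↦ hv (h ▸ hb)).exists_isPath_notMem hav hab
    exact hc.onCommonCycle_of_fan ha hb (hH.1 a haH v hvH hav).onCommonCycle hp hap hu
  have hH' := hH.2 (H ∪ {x | x ∈ c.support}) Set.subset_union_left fun u hu v hv huv ↦ by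
    rcases hu with hu | hu <;> rcases hv with hv | hv
    · exact hH.1 u hu v hv huv
    · exact (hcommon v hv u hu).symm.twoDisjointPaths huv
    · exact (hcommon u hu v hv).twoDisjointPaths huv
    · exact OnCommonCycle.twoDisjointPaths ⟨r, c, hc, hu, hv⟩ huv
  exact fun x hx ↦ hH' ▸ Or.inr hx

end

theorem biconnected_component_has_min_cycle_general {V : Type*}
    (G : SimpleGraph V)
    (H : Set V) (hH : IsBiconnectedComponent G H)
    (hH2 : ∃ x ∈ H, ∃ y ∈ H, x ≠ y) :
    ∃ (a : V) (c : G.Walk a a), IsMinCycle c ∧ ∀ x ∈ c.support, x ∈ H := by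
  classical
  obtain ⟨x, hx, y, hy, hxy⟩ := hH2
  obtain ⟨r, c₀, hc₀, hxc₀, hyc₀⟩ := (hH.1 x hx y hy hxy).onCommonCycle
  have hex : ∃ n, ∃ (a : V) (c : G.Walk a a), c.IsCycle ∧ (∀ z ∈ c.support, z ∈ H) ∧
      c.length = n :=
    ⟨_, r, c₀, hc₀, hH.support_subset_of_isCycle hc₀ hxc₀ hyc₀ hxy hx hy, rfl⟩
  obtain ⟨a, c, hc, hcH, hlen⟩ := Nat.find_spec hex
  refine ⟨a, c, hc.isMinCycle fun u hu v hv huv b c' hc' hu' hv' ↦ ?_, hcH⟩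
  exact hlen ▸ Nat.find_min' hex
    ⟨b, c', hc', hH.support_subset_of_isCycle hc' hu' hv' huv (hcH u hu) (hcH v hv), rfl⟩

/-- Any biconnected component `H` of a graph `G` containing at least two vertices
contains a min-cycle of `G`. -/
theorem biconnected_component_has_min_cycle {V : Type*} [Fintype V]
    (G : SimpleGraph V)
    (H : Set V) (hH : IsBiconnectedComponent G H)
    (hH2 : ∃ x ∈ H, ∃ y ∈ H, x ≠ y) :
    ∃ (a : V) (c : G.Walk a a), IsMinCycle c ∧ ∀ x ∈ c.support, x ∈ H :=
  biconnected_component_has_min_cycle_general G H hH hH2
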